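/- arXiv:2303.13350 — 3 statements merged into one kernel-verified Lean document; each statement's English description precedes it below -/
import Mathlib

section
/- Let g be a positive integer, f an integer with 0 ≤ f ≤ g, and w a permutation of {1, …, g} with the property that whenever j' < j and w(j') > w(j), one has w(j) ≤ f < w(j'). Then for every k with 1 ≤ k ≤ g, setting k' = #{ j : 1 ≤ j ≤ k and w(j) > f }, the set { w(j) − f : 1 ≤ j ≤ k, w(j) > f } equals {1, 2, …, k'}. Moreover k' ≤ min(k, g − f). -/
/-!
The hypothesis on `w` forbids inversions among the positions `j` with `w j > f`, so `w` is
strictly increasing there. Hence if `w j = f + m` with `j ≤ k`, every value `f + m'` with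
`1 ≤ m' ≤ m` is taken at some position `≤ j`: the values `w j - f` over such `j ≤ k` form an
initial segment of `ℕ⁺`, injectively indexed, so it is `{1, …, k'}`.
-/

theorem Finset.eq_Icc_one_card_of_Icc_subset {s : Finset ℕ} (hpos : ∀ m ∈ s, 1 ≤ m)
    (hdown : ∀ m ∈ s, Finset.Icc 1 m ⊆ s) : s = Finset.Icc 1 s.card := by
  have hsub : s ⊆ Finset.Icc 1 s.card := fun m hm => by
    have hm_le : m ≤ s.card := by simpa using Finset.card_le_card (hdown m hm)
    exact Finset.mem_Icc.2 ⟨hpos m hm, hm_le⟩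
  exact Finset.eq_of_subset_of_card_le hsub (by simp)

section CosetRepresentative

variable {g f k : ℕ} {w : ℕ → ℕ}

theorem strictMonoOn_of_no_large_inversion (hinj : Set.InjOn w (Set.Icc 1 g))
    (hw : ∀ j' j, 1 ≤ j' → j' < j → j ≤ g → w j < w j' → w j ≤ f ∧ f < w j') :
    StrictMonoOn w {j | j ∈ Set.Icc 1 g ∧ f < w j} := by
  rintro a ⟨ha, -⟩ b ⟨hb, hfb⟩ hab
  have hle : w a ≤ w b := by
    by_contra! hlt
    exact absurd (hw a b ha.1 hab hb.2 hlt).1 (not_le.2 hfb)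
  exact lt_of_le_of_ne hle fun h => hab.ne (hinj ha hb h)

theorem mem_Icc_of_mem_filter_Icc (hkg : k ≤ g) {j : ℕ}
    (hj : j ∈ (Finset.Icc 1 k).filter (fun j => f < w j)) : j ∈ Set.Icc 1 g ∧ f < w j := by
  simp only [Finset.mem_filter, Finset.mem_Icc] at hj
  exact ⟨⟨hj.1.1, hj.1.2.trans hkg⟩, hj.2⟩

theorem injOn_sub_filter_Icc (hkg : k ≤ g) (hinj : Set.InjOn w (Set.Icc 1 g)) :
    Set.InjOn (fun j => w j - f) ((Finset.Icc 1 k).filter (fun j => f < w j) : Set ℕ) := by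
  intro a ha b hb hab
  obtain ⟨ha, hfa⟩ := mem_Icc_of_mem_filter_Icc hkg ha
  obtain ⟨hb, hfb⟩ := mem_Icc_of_mem_filter_Icc hkg hb
  exact hinj ha hb (by simp only at hab; omega)

theorem image_sub_filter_Icc_subset (hkg : k ≤ g)
    (hmaps : Set.MapsTo w (Set.Icc 1 g) (Set.Icc 1 g)) :
    ((Finset.Icc 1 k).filter (fun j => f < w j)).image (fun j => w j - f)
      ⊆ Finset.Icc 1 (g - f) := by
  intro m hm
  obtain ⟨j, hj, rfl⟩ := Finset.mem_image.1 hm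
  obtain ⟨hjg, hfj⟩ := mem_Icc_of_mem_filter_Icc hkg hj
  have := (hmaps hjg).2
  exact Finset.mem_Icc.2 ⟨by omega, by omega⟩

theorem Icc_subset_image_sub_filter_Icc (hkg : k ≤ g)
    (hbij : Set.BijOn w (Set.Icc 1 g) (Set.Icc 1 g))
    (hw : ∀ j' j, 1 ≤ j' → j' < j → j ≤ g → w j < w j' → w j ≤ f ∧ f < w j') :
    ∀ m ∈ ((Finset.Icc 1 k).filter (fun j => f < w j)).image (fun j => w j - f),
      Finset.Icc 1 m ⊆ ((Finset.Icc 1 k).filter (fun j => f < w j)).image (fun j => w j - f) := by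
  intro m hm m' hm'
  obtain ⟨j, hjS, rfl⟩ := Finset.mem_image.1 hm
  obtain ⟨hj, hfj⟩ := mem_Icc_of_mem_filter_Icc hkg hjS
  have hjk := (Finset.mem_Icc.1 (Finset.mem_filter.1 hjS).1).2
  rw [Finset.mem_Icc] at hm'
  have hwj := (hbij.mapsTo hj).2
  obtain ⟨i, hi, hwi⟩ := hbij.surjOn (⟨by omega, by omega⟩ : f + m' ∈ Set.Icc 1 g)
  have hij : i ≤ j := ((strictMonoOn_of_no_large_inversion hbij.injOn hw).le_iff_le
    ⟨hi, by omega⟩ ⟨hj, hfj⟩).1 (by omega)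
  refine Finset.mem_image.2 ⟨i, Finset.mem_filter.2 ⟨?_, by omega⟩, by omega⟩
  exact Finset.mem_Icc.2 ⟨hi.1, hij.trans hjk⟩

end CosetRepresentative

theorem weyl_coset_rep_image_general (g f : ℕ) (w : ℕ → ℕ)
    (hbij : Set.BijOn w (Set.Icc 1 g) (Set.Icc 1 g))
    (hw : ∀ j' j, 1 ≤ j' → j' < j → j ≤ g → w j < w j' → w j ≤ f ∧ f < w j') :
    ∀ k, 1 ≤ k → k ≤ g →
      (Finset.image (fun j => w j - f) ((Finset.Icc 1 k).filter (fun j => f < w j)))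
        = Finset.Icc 1 (((Finset.Icc 1 k).filter (fun j => f < w j)).card) ∧
      ((Finset.Icc 1 k).filter (fun j => f < w j)).card ≤ min k (g - f) := by
  intro k _ hkg
  set S := (Finset.Icc 1 k).filter (fun j => f < w j)
  have hsub := image_sub_filter_Icc_subset (f := f) hkg hbij.mapsTo
  have himage := Finset.eq_Icc_one_card_of_Icc_subset
    (fun m hm => (Finset.mem_Icc.1 (hsub hm)).1) (Icc_subset_image_sub_filter_Icc hkg hbij hw)
  have hcard : (S.image (fun j => w j - f)).card = S.card :=
    Finset.card_image_of_injOn (injOn_sub_filter_Icc hkg hbij.injOn)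
  refine ⟨hcard ▸ himage, le_min ?_ ?_⟩
  · simpa using Finset.card_filter_le (Finset.Icc 1 k) (fun j => f < w j)
  · simpa [← hcard] using Finset.card_le_card hsub

theorem weyl_coset_rep_image (g f : ℕ) (hg : 0 < g) (hf : f ≤ g) (w : ℕ → ℕ)
    (hbij : Set.BijOn w (Set.Icc 1 g) (Set.Icc 1 g))
    (hw : ∀ j' j, 1 ≤ j' → j' < j → j ≤ g → w j < w j' → w j ≤ f ∧ f < w j') :
    ∀ k, 1 ≤ k → k ≤ g →
      (Finset.image (fun j => w j - f) ((Finset.Icc 1 k).filter (fun j => f < w j)))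
        = Finset.Icc 1 (((Finset.Icc 1 k).filter (fun j => f < w j)).card) ∧
      ((Finset.Icc 1 k).filter (fun j => f < w j)).card ≤ min k (g - f) :=
  weyl_coset_rep_image_general g f w hbij hw
end

section
/- Let g be a positive integer and f an integer with 0 ≤ f ≤ g. The permutation w of {1, …, g} defined by w(k) = f + k for 1 ≤ k ≤ g − f and w(k) = k − (g − f) for g − f < k ≤ g has exactly f·(g − f) inversions, i.e. there are exactly f·(g−f) pairs (j', j) with j' < j and w(j') > w(j). Moreover, every permutation of {1,…,g} satisfying the property that whenever j' < j and w(j') > w(j) one has w(j) ≤ f < w(j'), has at most f·(g − f) inversions. -/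
/-!
Every inversion `(i, j)` of the rotation pairs a position of the first block with one of the second,
and every such pair is an inversion, so the inversions are exactly the `(g - f) * f` cross pairs.
For a permutation satisfying the condition, `(i, j) ↦ (w i, w j)` embeds the inversions into
`(f, g] × [1, f]`, which has `(g - f) * f` elements.
-/

open Finset

section Inversions

variable {α β : Type*} [LinearOrder α] [LinearOrder β]

def inversions (w : α → β) (s : Finset α) : Finset (α × α) :=
  (s ×ˢ s).filter fun q => q.1 < q.2 ∧ w q.2 < w q.1

theorem mem_inversions {w : α → β} {s : Finset α} {q : α × α} :
    q ∈ inversions w s ↔ (q.1 ∈ s ∧ q.2 ∈ s) ∧ q.1 < q.2 ∧ w q.2 < w q.1 := by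
  simp only [inversions, mem_filter, mem_product]

theorem inversions_union_eq_product {w : α → β} {A B : Finset α}
    (hAB : ∀ a ∈ A, ∀ b ∈ B, a < b) (hA : StrictMonoOn w A) (hB : StrictMonoOn w B)
    (hw : ∀ a ∈ A, ∀ b ∈ B, w b < w a) :
    inversions w (A ∪ B) = A ×ˢ B := by
  ext ⟨i, j⟩
  simp only [mem_inversions, mem_union, mem_product]
  constructor
  · rintro ⟨⟨hi | hi, hj | hj⟩, hij, hwij⟩
    · exact absurd (hA hi hj hij) hwij.not_gt
    · exact ⟨hi, hj⟩
    · exact absurd (hAB j hj i hi) hij.not_gt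
    · exact absurd (hB hi hj hij) hwij.not_gt
  · rintro ⟨hi, hj⟩
    exact ⟨⟨.inl hi, .inr hj⟩, hAB i hi j hj, hw i hi j hj⟩

theorem card_inversions_le_mul {w : α → β} {s : Finset α} (hinj : Set.InjOn w s)
    (T U : Finset β)
    (hTU : ∀ i ∈ s, ∀ j ∈ s, i < j → w j < w i → w i ∈ T ∧ w j ∈ U) :
    #(inversions w s) ≤ #T * #U := by
  rw [← card_product]
  refine card_le_card_of_injOn (fun q => (w q.1, w q.2)) ?_ ?_
  · rintro ⟨i, j⟩ hq
    obtain ⟨⟨hi, hj⟩, hij, hwij⟩ := mem_inversions.mp hq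
    exact mem_product.mpr (hTU i hi j hj hij hwij)
  · rintro ⟨i, j⟩ hq ⟨i', j'⟩ hq' heq
    obtain ⟨⟨hi, hj⟩, -⟩ := mem_inversions.mp hq
    obtain ⟨⟨hi', hj'⟩, -⟩ := mem_inversions.mp hq'
    obtain ⟨hwi, hwj⟩ := Prod.mk.inj heq
    exact Prod.ext (hinj hi hi' hwi) (hinj hj hj' hwj)

end Inversions

theorem inversions_rotation {w : ℕ → ℕ} {g f : ℕ}
    (hlow : ∀ k, 1 ≤ k → k ≤ g - f → w k = f + k)
    (hhigh : ∀ k, g - f < k → k ≤ g → w k = k - (g - f)) :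
    inversions w (Icc 1 g) = Icc 1 (g - f) ×ˢ Ioc (g - f) g := by
  have hblocks : Icc 1 (g - f) ∪ Ioc (g - f) g = Icc 1 g := by
    ext k; simp only [mem_union, mem_Icc, mem_Ioc]; omega
  rw [← hblocks]
  refine inversions_union_eq_product ?_ ?_ ?_ ?_
  · simp only [mem_Icc, mem_Ioc]; omega
  · intro a ha b hb hab
    simp only [coe_Icc, Set.mem_Icc] at ha hb
    rw [hlow a ha.1 ha.2, hlow b hb.1 hb.2]; omega
  · intro a ha b hb hab
    simp only [coe_Ioc, Set.mem_Ioc] at ha hb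
    rw [hhigh a ha.1 ha.2, hhigh b hb.1 hb.2]; omega
  · intro a ha b hb
    simp only [mem_Icc, mem_Ioc] at ha hb
    rw [hlow a ha.1 ha.2, hhigh b hb.1 hb.2]; omega

theorem card_inversions_le_of_mapsTo_Icc {w : ℕ → ℕ} {g f : ℕ}
    (hmaps : Set.MapsTo w (Set.Icc 1 g) (Set.Icc 1 g)) (hinj : Set.InjOn w (Set.Icc 1 g))
    (hsplit : ∀ j' j, 1 ≤ j' → j' < j → j ≤ g → w j < w j' → w j ≤ f ∧ f < w j') :
    #(inversions w (Icc 1 g)) ≤ (g - f) * f := by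
  have hvalues : ∀ i ∈ Icc 1 g, ∀ j ∈ Icc 1 g, i < j → w j < w i →
      w i ∈ Ioc f g ∧ w j ∈ Icc 1 f := by
    intro i hi j hj hij hwij
    rw [mem_Icc] at hi hj
    have hwi := hmaps hi
    have hwj := hmaps hj
    have := hsplit i j hi.1 hij hj.2 hwij
    simp only [Set.mem_Icc, mem_Ioc, mem_Icc] at hwi hwj ⊢
    omega
  have hbound := card_inversions_le_mul (by rwa [coe_Icc]) _ _ hvalues
  rwa [Nat.card_Ioc, Nat.card_Icc, Nat.add_sub_cancel] at hbound

theorem rotation_perm_inversions_general (g f : ℕ) (hf : f ≤ g) :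
    (∀ w : ℕ → ℕ,
      (∀ k, 1 ≤ k → k ≤ g - f → w k = f + k) →
      (∀ k, g - f < k → k ≤ g → w k = k - (g - f)) →
      (((Finset.Icc 1 g) ×ˢ (Finset.Icc 1 g)).filter
          (fun q => q.1 < q.2 ∧ w q.2 < w q.1)).card = f * (g - f)) ∧
    (∀ w : ℕ → ℕ, Set.BijOn w (Set.Icc 1 g) (Set.Icc 1 g) →
      (∀ j' j, 1 ≤ j' → j' < j → j ≤ g → w j < w j' → w j ≤ f ∧ f < w j') →
      (((Finset.Icc 1 g) ×ˢ (Finset.Icc 1 g)).filter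
          (fun q => q.1 < q.2 ∧ w q.2 < w q.1)).card ≤ f * (g - f)) := by
  refine ⟨fun w hlow hhigh => ?_, fun w hbij hsplit => ?_⟩
  · change #(inversions w (Icc 1 g)) = _
    rw [inversions_rotation hlow hhigh, card_product, Nat.card_Icc, Nat.card_Ioc,
      Nat.sub_sub_self hf, Nat.add_sub_cancel, mul_comm]
  · rw [mul_comm]
    exact card_inversions_le_of_mapsTo_Icc hbij.mapsTo hbij.injOn hsplit

theorem rotation_perm_inversions (g f : ℕ) (hg : 0 < g) (hf : f ≤ g) :
    (∀ w : ℕ → ℕ,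
      (∀ k, 1 ≤ k → k ≤ g - f → w k = f + k) →
      (∀ k, g - f < k → k ≤ g → w k = k - (g - f)) →
      (((Finset.Icc 1 g) ×ˢ (Finset.Icc 1 g)).filter
          (fun q => q.1 < q.2 ∧ w q.2 < w q.1)).card = f * (g - f)) ∧
    (∀ w : ℕ → ℕ, Set.BijOn w (Set.Icc 1 g) (Set.Icc 1 g) →
      (∀ j' j, 1 ≤ j' → j' < j → j ≤ g → w j < w j' → w j ≤ f ∧ f < w j') →
      (((Finset.Icc 1 g) ×ˢ (Finset.Icc 1 g)).filter
          (fun q => q.1 < q.2 ∧ w q.2 < w q.1)).card ≤ f * (g - f)) :=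
  rotation_perm_inversions_general g f hf
end

section
/- Let K be a field, g a positive integer, f an integer with 0 ≤ f ≤ g, and w a permutation of {1, …, g} satisfying: whenever j' < j and w(j') > w(j), one has w(j) ≤ f < w(j'). Let V and W be K-vector spaces with bases e_1, …, e_g and e'_1, …, e'_g respectively, and define the linear map F : V → W by F(e_j) = e'_{w(j) − f} if w(j) > f and F(e_j) = 0 if w(j) ≤ f. Then for every 1 ≤ k ≤ g, the image F(span(e_1,…,e_k)) equals span(e'_1, …, e'_l) where l = dim F(span(e_1,…,e_k)), and l ≤ min(k, g − f). If moreover w(k) = f + k for all k ≤ g − f, then l = min(k, g − f). -/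
/-!
`F` sends each `e_j` to `0` or to `e'_{w j - f}`, so `F(span(e_j : j < k))` is spanned by the
`e'_i` with `i` in `A_k = {w j - f : j < k, f ≤ w j}`, and has dimension `|A_k|`. The condition
on `w` makes `A_k` an initial segment: if `w j = f + i` with `j < k` and `i' < i`, the preimage
`j'` of `f + i'` cannot satisfy `k ≤ j'`, since then `j < j'` and `w j' < w j` would force
`w j' < f`.
-/

open Set Submodule

theorem Fin.ncard_setOf_val_lt (n m : ℕ) : {i : Fin n | (i : ℕ) < m}.ncard = min n m := by
  rw [Set.ncard_eq_toFinset_card', Set.toFinset_ofPred, Fin.card_filter_val_lt]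

theorem IsLowerSet.eq_setOf_val_lt_ncard {n : ℕ} {s : Set (Fin n)} (hs : IsLowerSet s) :
    s = {i : Fin n | (i : ℕ) < s.ncard} := by
  rcases hs.eq_univ_or_Iio with rfl | ⟨a, rfl⟩
  · simp [Set.ncard_univ]
  · ext i
    rw [mem_ofPred_eq, Set.mem_Iio, Set.ncard_eq_toFinset_card', Set.toFinset_Iio, Fin.card_Iio,
      Fin.lt_def]

theorem Module.Basis.finrank_span_image {R M ι : Type*} [Ring R] [StrongRankCondition R]
    [AddCommGroup M] [Module R M] [Finite ι] (b : Module.Basis ι R M) (s : Set ι) :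
    Module.finrank R (span R (b '' s)) = s.ncard := by
  classical
  have := Fintype.ofFinite ι
  have := nontrivial_of_invariantBasisNumber R
  rw [finrank_span_set_eq_card (b.linearIndependent.linearIndepOn _ |>.id_image),
    Set.toFinset_card, Fintype.card_eq_nat_card, Nat.card_coe_set_eq]
  exact Set.ncard_image_of_injective s b.injective

section Frobenius

variable {g : ℕ} (f : ℕ) (w : Equiv.Perm (Fin g))

/-- The set `A_k`: the indices `i` with `e'_i = F e_j` for some `j < k`. -/
def frobeniusImageIndices (k : ℕ) : Set (Fin g) :=
  {i | ∃ j : Fin g, (j : ℕ) < k ∧ (w j : ℕ) = f + i}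

variable {f w}

theorem isLowerSet_frobeniusImageIndices
    (hw : ∀ j' j : Fin g, j' < j → w j < w j' → ((w j : ℕ) < f ∧ f ≤ (w j' : ℕ))) (k : ℕ) :
    IsLowerSet (frobeniusImageIndices f w k) := by
  rintro i i' hle ⟨j, hjk, hj⟩
  rcases hle.lt_or_eq with hlt | rfl
  · rw [Fin.lt_def] at hlt
    set j' := w.symm ⟨f + i', by have := (w j).isLt; omega⟩
    refine ⟨j', ?_, by simp [j']⟩
    by_contra! hkj'
    have hjj' : j < j' := Fin.lt_def.2 (by omega)
    have hww : w j' < w j := by simp [j', Fin.lt_def]; omega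
    simpa [j'] using (hw j j' hjj' hww).1
  · exact ⟨j, hjk, hj⟩

variable {K V W : Type*} [Field K] [AddCommGroup V] [Module K V] [AddCommGroup W] [Module K W]
  {e : Module.Basis (Fin g) K V} {e' : Module.Basis (Fin g) K W} {F : V →ₗ[K] W}

theorem map_span_eq_span_frobeniusImageIndices
    (hF_shift : ∀ j (i : Fin g), (w j : ℕ) = f + i → F (e j) = e' i)
    (hF_zero : ∀ j, (w j : ℕ) < f → F (e j) = 0) (k : ℕ) :
    map F (span K (e '' {j | (j : ℕ) < k})) = span K (e' '' frobeniusImageIndices f w k) := by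
  rw [map_span, ← Set.image_comp]
  apply le_antisymm
  · rw [span_le]
    rintro _ ⟨j, hj, rfl⟩
    by_cases h : f ≤ (w j : ℕ)
    · have hi : (w j : ℕ) - f < g := by have := (w j).isLt; omega
      exact subset_span
        ⟨⟨_, hi⟩, ⟨j, hj, by simp only; omega⟩, (hF_shift j _ (by simp only; omega)).symm⟩
    · simp only [Function.comp, hF_zero j (by omega), SetLike.mem_coe, zero_mem]
  · rw [span_le]
    rintro _ ⟨i, ⟨j, hjk, hj⟩, rfl⟩
    exact subset_span ⟨j, hjk, hF_shift j i hj⟩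

theorem ncard_frobeniusImageIndices_le (k : ℕ) : (frobeniusImageIndices f w k).ncard ≤ g - f := by
  have hsub : frobeniusImageIndices f w k ⊆ {i | (i : ℕ) < g - f} := by
    rintro i ⟨j, -, hj⟩
    have := (w j).isLt
    rw [mem_ofPred_eq]
    omega
  grw [ncard_le_ncard hsub, Fin.ncard_setOf_val_lt]
  exact min_le_right _ _

theorem min_le_ncard_frobeniusImageIndices
    (hw_id : ∀ j : Fin g, (j : ℕ) < g - f → (w j : ℕ) = f + (j : ℕ)) (k : ℕ) :
    min k (g - f) ≤ (frobeniusImageIndices f w k).ncard := by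
  have hsub : {i : Fin g | (i : ℕ) < min k (g - f)} ⊆ frobeniusImageIndices f w k := by
    intro i hi
    rw [mem_ofPred_eq, lt_min_iff] at hi
    exact ⟨i, hi.1, hw_id i hi.2⟩
  grw [← ncard_le_ncard hsub, Fin.ncard_setOf_val_lt]
  omega

end Frobenius

theorem frobenius_image_of_filtration (K : Type*) [Field K]
    (g f : ℕ)
    (w : Equiv.Perm (Fin g))
    (hw : ∀ j' j : Fin g, j' < j → w j < w j' → ((w j : ℕ) < f ∧ f ≤ (w j' : ℕ)))
    (V W : Type*) [AddCommGroup V] [Module K V] [AddCommGroup W] [Module K W]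
    (e : Module.Basis (Fin g) K V) (e' : Module.Basis (Fin g) K W)
    (F : V →ₗ[K] W)
    (hF : ∀ j : Fin g, F (e j) =
      if h : f ≤ (w j : ℕ) then
        e' ⟨(w j : ℕ) - f, by have := (w j).isLt; omega⟩ else 0) :
    ∀ k : ℕ, 1 ≤ k → k ≤ g →
      (Submodule.map F (Submodule.span K (e '' {j : Fin g | (j : ℕ) < k}))
          = Submodule.span K (e' '' {j : Fin g | (j : ℕ) <
              Module.finrank K (Submodule.map F
                (Submodule.span K (e '' {j : Fin g | (j : ℕ) < k})))}) ∧
        Module.finrank K (Submodule.map F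
            (Submodule.span K (e '' {j : Fin g | (j : ℕ) < k}))) ≤ min k (g - f)) ∧
      ((∀ j : Fin g, (j : ℕ) < g - f → (w j : ℕ) = f + (j : ℕ)) →
        Module.finrank K (Submodule.map F
            (Submodule.span K (e '' {j : Fin g | (j : ℕ) < k}))) = min k (g - f)) := by
  intro k _ hkg
  set A := frobeniusImageIndices f w k
  have himage : map F (span K (e '' {j | (j : ℕ) < k})) = span K (e' '' A) := by
    refine map_span_eq_span_frobeniusImageIndices (fun j i hj => ?_) (fun j hj => ?_) k
    · rw [hF, dif_pos (by omega)]
      congr 1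
      ext
      simp only
      omega
    · rw [hF, dif_neg (by omega)]
  have hrank : Module.finrank K (map F (span K (e '' {j | (j : ℕ) < k}))) = A.ncard := by
    rw [himage, e'.finrank_span_image]
  have hA : A = {i : Fin g | (i : ℕ) < A.ncard} :=
    (isLowerSet_frobeniusImageIndices hw k).eq_setOf_val_lt_ncard
  have hle_k : A.ncard ≤ k := by
    have := Module.Finite.of_basis e
    have := Submodule.finrank_map_le F (span K (e '' {j | (j : ℕ) < k}))
    rw [hrank, e.finrank_span_image, Fin.ncard_setOf_val_lt] at this
    omega
  have hle_gf : A.ncard ≤ g - f := ncard_frobeniusImageIndices_le k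
  refine ⟨⟨by rw [hrank, himage, ← hA], by omega⟩, fun hw_id => ?_⟩
  rw [hrank]
  exact le_antisymm (le_min hle_k hle_gf) (min_le_ncard_frobeniusImageIndices hw_id k)
end
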